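/- Let f : {0,1}^n → {0,1}, let i ≠ j be coordinates, and let f_0, f_1 be the restrictions of f obtained by setting x_j = 0 and x_j = 1 respectively. If i is relevant for f, then 2^{−deg_i(f)} ≤ 2^{−deg_i(f_0) − 1} + 2^{−deg_i(f_1) − 1}, where 2^{−deg_i(g)} is interpreted as 0 when i is not relevant for g. -/

import Mathlib

open MvPolynomial Finset
open scoped Classical

/-- `bval` converts a boolean to the real number 0 or 1. -/
def bval (x : Bool) : ℝ := if x then 1 else 0

/-- `Represents P f` : `P` is the multilinear real polynomial representing the
Boolean function `f : {0,1}^n → {0,1}`. -/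
def Represents {n : ℕ} (P : MvPolynomial (Fin n) ℝ) (f : (Fin n → Bool) → Bool) : Prop :=
  (∀ m ∈ P.support, ∀ i, m i ≤ 1) ∧
  ∀ x : Fin n → Bool, MvPolynomial.eval (fun i => bval (x i)) P = bval (f x)

/-- Flip the `i`-th bit of `x`. -/
def flip1 {n : ℕ} (x : Fin n → Bool) (i : Fin n) : Fin n → Bool :=
  Function.update x i (!(x i))

/-- Coordinate `i` is relevant for `f`. -/
def Relevant {n : ℕ} (f : (Fin n → Bool) → Bool) (i : Fin n) : Prop :=
  ∃ x, f (flip1 x i) ≠ f x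

/-- The set of relevant coordinates of `f`. -/
noncomputable def relSet {n : ℕ} (f : (Fin n → Bool) → Bool) : Finset (Fin n) :=
  Finset.univ.filter fun i => Relevant f i

/-- The influence of coordinate `i` on `f`. -/
noncomputable def influence {n : ℕ} (f : (Fin n → Bool) → Bool) (i : Fin n) : ℝ :=
  ((Finset.univ.filter fun x => f (flip1 x i) ≠ f x).card : ℝ) / 2 ^ n

/-- `degI P i` : the maximal degree of a monomial of `P` containing `x i`. -/
noncomputable def degI {n : ℕ} (P : MvPolynomial (Fin n) ℝ) (i : Fin n) : ℕ :=
  (P.support.filter fun m => m i ≠ 0).sup fun m => m.sum fun _ e => e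

/-- `W P f = Σ_{i ∈ R(f)} 2^{-deg_i(f)}`, computed via the representing polynomial `P`. -/
noncomputable def W {n : ℕ} (P : MvPolynomial (Fin n) ℝ) (f : (Fin n → Bool) → Bool) : ℝ :=
  ∑ i ∈ relSet f, ((2:ℝ) ^ degI P i)⁻¹

/-- Flip the bits of `x` in the block `B`. -/
def flipB {n : ℕ} (x : Fin n → Bool) (B : Finset (Fin n)) : Fin n → Bool :=
  fun j => if j ∈ B then !(x j) else x j

/-- `f` has `b` pairwise disjoint sensitive blocks at some input. -/
def HasSensBlocks {n : ℕ} (f : (Fin n → Bool) → Bool) (b : ℕ) : Prop :=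
  ∃ (x : Fin n → Bool) (B : Fin b → Finset (Fin n)),
    (∀ j k, j ≠ k → Disjoint (B j) (B k)) ∧ ∀ j, f (flipB x (B j)) ≠ f x

/-- The block sensitivity of `f`. -/
noncomputable def bs {n : ℕ} (f : (Fin n → Bool) → Bool) : ℕ :=
  sSup {b | HasSensBlocks f b}

/-- Restriction of `f` fixing the coordinates in `H` according to `α`. -/
def restrict {n : ℕ} (f : (Fin n → Bool) → Bool) (H : Finset (Fin n)) (α : Fin n → Bool) :
    (Fin n → Bool) → Bool :=
  fun x => f fun i => if i ∈ H then α i else x i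

/-- The multilinear monomial (exponent vector) with support `S`. -/
noncomputable def monOf {n : ℕ} (S : Finset (Fin n)) : Fin n →₀ ℕ :=
  ∑ j ∈ S, Finsupp.single j 1

/-!
View a Boolean function `g` as the set function `F T = g(1_T)`. The coefficient of `x^S` in the
multilinear polynomial of `g` is the Möbius transform `μF S = ∑_{T ⊆ S} (-1)^|S \ T| F T`, so
`deg_i g` is the largest `|S|` with `i ∈ S` and `μF S ≠ 0`. For the restrictions
`F₀ T = F (T \ {j})` and `F₁ T = F (T ∪ {j})`, the identity `f = x_j f₁ + (1 - x_j) f₀` reads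
`μF₀ S = μF S` and `μF₁ S = μF S + μF (S ∪ {j})` for `j ∉ S`. A top monomial `S` of `f₀` or `f₁`
avoids `j`, hence yields a nonzero coefficient of `f` at `S` or at `S ∪ {j}`: so
`deg_i f ≥ deg_i f_b`, and if `i` is irrelevant for the other restriction its coefficient at `S`
vanishes, leaving `S ∪ {j}` and `deg_i f ≥ deg_i f_b + 1`.
-/

section MoebiusTransform

variable {α R : Type*} [CommRing R]

def zetaTransform (c : Finset α → R) (T : Finset α) : R :=
  ∑ U ∈ T.powerset, c U

@[simp]
lemma zetaTransform_empty (c : Finset α → R) : zetaTransform c ∅ = c ∅ := by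
  simp [zetaTransform]

lemma zetaTransform_congr {c d : Finset α → R} {T : Finset α} (h : ∀ U ⊆ T, c U = d U) :
    zetaTransform c T = zetaTransform d T :=
  sum_congr rfl fun U hU ↦ h U (mem_powerset.1 hU)

variable [DecidableEq α]

def moebiusTransform (F : Finset α → R) (S : Finset α) : R :=
  ∑ T ∈ S.powerset, (-1) ^ #(S \ T) * F T

@[simp]
lemma moebiusTransform_empty (F : Finset α → R) : moebiusTransform F ∅ = F ∅ := by
  simp [moebiusTransform]

lemma zetaTransform_insert (c : Finset α → R) {a : α} {T : Finset α} (ha : a ∉ T) :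
    zetaTransform c (insert a T) = zetaTransform c T + zetaTransform (fun U ↦ c (insert a U)) T :=
  sum_powerset_insert ha c

lemma moebiusTransform_insert (F : Finset α → R) {a : α} {S : Finset α} (ha : a ∉ S) :
    moebiusTransform F (insert a S) =
      moebiusTransform (fun T ↦ F (insert a T)) S - moebiusTransform F S := by
  rw [moebiusTransform, sum_powerset_insert ha, moebiusTransform, moebiusTransform,
    ← sum_sub_distrib, ← sum_add_distrib]
  refine sum_congr rfl fun T hT ↦ ?_
  have haT : a ∉ T := fun h ↦ ha (mem_powerset.1 hT h)
  rw [insert_sdiff_of_notMem _ haT, card_insert_of_notMem (fun h ↦ ha (sdiff_subset h)),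
    insert_sdiff_insert, sdiff_insert_of_notMem ha]
  ring

lemma moebiusTransform_congr {F G : Finset α → R} {S : Finset α} (h : ∀ T ⊆ S, F T = G T) :
    moebiusTransform F S = moebiusTransform G S :=
  sum_congr rfl fun T hT ↦ by rw [h T (mem_powerset.1 hT)]

lemma moebiusTransform_zetaTransform (c : Finset α → R) (S : Finset α) :
    moebiusTransform (zetaTransform c) S = c S := by
  induction S using Finset.induction_on generalizing c with
  | empty => simp
  | insert a S ha ih =>
    have hsplit : moebiusTransform (fun T ↦ zetaTransform c (insert a T)) S =
        moebiusTransform (zetaTransform c) S +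
          moebiusTransform (zetaTransform fun U ↦ c (insert a U)) S := by
      rw [moebiusTransform_congr fun T hT ↦ zetaTransform_insert c fun h ↦ ha (hT h)]
      simp only [moebiusTransform, mul_add, sum_add_distrib]
    rw [moebiusTransform_insert _ ha, hsplit, add_sub_cancel_left, ih]

lemma zetaTransform_moebiusTransform (F : Finset α → R) (T : Finset α) :
    zetaTransform (moebiusTransform F) T = F T := by
  induction T using Finset.induction_on generalizing F with
  | empty => simp
  | insert a T ha ih =>
    rw [zetaTransform_insert _ ha,
      zetaTransform_congr fun U hU ↦ moebiusTransform_insert F fun h ↦ ha (hU h)]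
    simp only [zetaTransform, sum_sub_distrib] at ih ⊢
    rw [ih, ih]
    ring

lemma insert_eq_iff_moebiusTransform_eq_zero {F : Finset α → R} {a : α} :
    (∀ T, F (insert a T) = F T) ↔ ∀ S, a ∈ S → moebiusTransform F S = 0 := by
  constructor
  · intro h S haS
    rw [← insert_erase haS, moebiusTransform_insert _ (notMem_erase a S)]
    simp only [h, sub_self]
  · intro h T
    by_cases haT : a ∈ T
    · rw [insert_eq_of_mem haT]
    · rw [← zetaTransform_moebiusTransform F, zetaTransform_insert _ haT,
        zetaTransform_congr fun U _ ↦ h _ (mem_insert_self a U), zetaTransform_moebiusTransform]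
      simp [zetaTransform]

section Restriction

variable {F : Finset α → R} {j : α}

lemma moebiusTransform_comp_erase {S : Finset α} (hj : j ∉ S) :
    moebiusTransform (fun T ↦ F (T.erase j)) S = moebiusTransform F S :=
  moebiusTransform_congr fun _ hT ↦ by rw [erase_eq_of_notMem fun h ↦ hj (hT h)]

lemma moebiusTransform_comp_insert {S : Finset α} (hj : j ∉ S) :
    moebiusTransform (fun T ↦ F (insert j T)) S =
      moebiusTransform F S + moebiusTransform F (insert j S) := by
  rw [moebiusTransform_insert F hj]
  ring

end Restriction

section Degree

variable [Fintype α]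

noncomputable def moebiusSupport (F : Finset α → R) (i : α) : Finset (Finset α) :=
  univ.filter fun S ↦ i ∈ S ∧ moebiusTransform F S ≠ 0

noncomputable def degreeAt (F : Finset α → R) (i : α) : ℕ :=
  (moebiusSupport F i).sup card

variable {F : Finset α → R} {i j : α}

@[simp]
lemma mem_moebiusSupport {S : Finset α} :
    S ∈ moebiusSupport F i ↔ i ∈ S ∧ moebiusTransform F S ≠ 0 := by
  simp [moebiusSupport]

lemma card_le_degreeAt {S : Finset α} (hi : i ∈ S) (hS : moebiusTransform F S ≠ 0) :
    #S ≤ degreeAt F i :=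
  le_sup (mem_moebiusSupport.2 ⟨hi, hS⟩)

lemma exists_card_eq_degreeAt (hF : (moebiusSupport F i).Nonempty)
    (hj : ∀ T, F (insert j T) = F T) :
    ∃ S, i ∈ S ∧ j ∉ S ∧ moebiusTransform F S ≠ 0 ∧ #S = degreeAt F i := by
  obtain ⟨S, hS, hcard⟩ := exists_mem_eq_sup _ hF card
  obtain ⟨hiS, hS0⟩ := mem_moebiusSupport.1 hS
  exact ⟨S, hiS, fun hjS ↦ hS0 (insert_eq_iff_moebiusTransform_eq_zero.1 hj S hjS), hS0,
    hcard.symm⟩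

lemma degreeAt_comp_erase_le (h0 : (moebiusSupport (fun T ↦ F (T.erase j)) i).Nonempty) :
    degreeAt (fun T ↦ F (T.erase j)) i ≤ degreeAt F i ∧
      (¬ (moebiusSupport (fun T ↦ F (insert j T)) i).Nonempty →
        degreeAt (fun T ↦ F (T.erase j)) i + 1 ≤ degreeAt F i) := by
  obtain ⟨S, hiS, hjS, hS0, hcard⟩ :=
    exists_card_eq_degreeAt h0 fun T ↦ by rw [erase_insert_eq_erase]
  rw [moebiusTransform_comp_erase hjS] at hS0
  refine ⟨hcard ▸ card_le_degreeAt hiS hS0, fun h1 ↦ ?_⟩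
  have hS1 : moebiusTransform (fun T ↦ F (insert j T)) S = 0 := by
    by_contra hS1
    exact h1 ⟨S, mem_moebiusSupport.2 ⟨hiS, hS1⟩⟩
  have hjS0 : moebiusTransform F (insert j S) ≠ 0 := by
    rw [moebiusTransform_comp_insert hjS] at hS1
    exact fun h ↦ hS0 (by simpa [h] using hS1)
  rw [← hcard, ← card_insert_of_notMem hjS]
  exact card_le_degreeAt (mem_insert_of_mem hiS) hjS0

lemma degreeAt_comp_insert_le (h1 : (moebiusSupport (fun T ↦ F (insert j T)) i).Nonempty) :
    degreeAt (fun T ↦ F (insert j T)) i ≤ degreeAt F i ∧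
      (¬ (moebiusSupport (fun T ↦ F (T.erase j)) i).Nonempty →
        degreeAt (fun T ↦ F (insert j T)) i + 1 ≤ degreeAt F i) := by
  obtain ⟨S, hiS, hjS, hS1, hcard⟩ :=
    exists_card_eq_degreeAt h1 fun T ↦ by rw [insert_idem]
  rw [moebiusTransform_comp_insert hjS] at hS1
  have hjS_le : #S + 1 ≤ #(insert j S) := (card_insert_of_notMem hjS).ge
  have hins : moebiusTransform F (insert j S) ≠ 0 → #S + 1 ≤ degreeAt F i :=
    fun h ↦ hjS_le.trans (card_le_degreeAt (mem_insert_of_mem hiS) h)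
  rw [← hcard]
  refine ⟨?_, fun h0 ↦ hins fun h ↦ ?_⟩
  · by_cases hS : moebiusTransform F S = 0
    · exact (hins fun h ↦ hS1 (by rw [hS, h, add_zero])).trans' (Nat.le_succ _)
    · exact card_le_degreeAt hiS hS
  · refine h0 ⟨S, mem_moebiusSupport.2 ⟨hiS, ?_⟩⟩
    rw [moebiusTransform_comp_erase hjS]
    simpa [h] using hS1

lemma moebiusSupport_comp_erase_nonempty_or (hij : i ≠ j) (hF : (moebiusSupport F i).Nonempty) :
    (moebiusSupport (fun T ↦ F (T.erase j)) i).Nonempty ∨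
      (moebiusSupport (fun T ↦ F (insert j T)) i).Nonempty := by
  obtain ⟨S, hS⟩ := hF
  obtain ⟨hiS, hS0⟩ := mem_moebiusSupport.1 hS
  by_cases hjS : j ∈ S
  · obtain ⟨S', hjS', rfl⟩ : ∃ S', j ∉ S' ∧ insert j S' = S :=
      ⟨S.erase j, notMem_erase j S, insert_erase hjS⟩
    have hiS' : i ∈ S' := (mem_insert.1 hiS).resolve_left hij
    by_cases hS' : moebiusTransform F S' = 0
    · right
      refine ⟨S', mem_moebiusSupport.2 ⟨hiS', ?_⟩⟩
      rwa [moebiusTransform_comp_insert hjS', hS', zero_add]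
    · left
      exact ⟨S', mem_moebiusSupport.2 ⟨hiS', by rwa [moebiusTransform_comp_erase hjS']⟩⟩
  · left
    exact ⟨S, mem_moebiusSupport.2 ⟨hiS, by rwa [moebiusTransform_comp_erase hjS]⟩⟩

theorem inv_two_pow_degreeAt_le (hij : i ≠ j)
    (hF : (moebiusSupport F i).Nonempty) :
    ((2 : ℝ) ^ degreeAt F i)⁻¹ ≤
      (if (moebiusSupport (fun T ↦ F (T.erase j)) i).Nonempty then
        ((2 : ℝ) ^ degreeAt (fun T ↦ F (T.erase j)) i)⁻¹ else 0) / 2 +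
      (if (moebiusSupport (fun T ↦ F (insert j T)) i).Nonempty then
        ((2 : ℝ) ^ degreeAt (fun T ↦ F (insert j T)) i)⁻¹ else 0) / 2 := by
  have anti {a b : ℕ} (h : a ≤ b) : ((2 : ℝ) ^ b)⁻¹ ≤ ((2 : ℝ) ^ a)⁻¹ :=
    inv_anti₀ (by positivity) (pow_le_pow_right₀ one_le_two h)
  have half (a : ℕ) : ((2 : ℝ) ^ (a + 1))⁻¹ = ((2 : ℝ) ^ a)⁻¹ / 2 := by
    rw [pow_succ, mul_inv, div_eq_mul_inv]
  by_cases h0 : (moebiusSupport (fun T ↦ F (T.erase j)) i).Nonempty <;>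
    by_cases h1 : (moebiusSupport (fun T ↦ F (insert j T)) i).Nonempty
  · rw [if_pos h0, if_pos h1]
    linarith [anti (degreeAt_comp_erase_le h0).1, anti (degreeAt_comp_insert_le h1).1]
  · rw [if_pos h0, if_neg h1, zero_div, add_zero, ← half]
    exact anti ((degreeAt_comp_erase_le h0).2 h1)
  · rw [if_neg h0, if_pos h1, zero_div, zero_add, ← half]
    exact anti ((degreeAt_comp_insert_le h1).2 h0)
  · exact ((moebiusSupport_comp_erase_nonempty_or hij hF).elim h0 h1).elim

end Degree

end MoebiusTransform

section BooleanFunction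

variable {n : ℕ}

def indicatorVec (T : Finset (Fin n)) : Fin n → Bool :=
  fun k ↦ decide (k ∈ T)

noncomputable def onSets (g : (Fin n → Bool) → Bool) (T : Finset (Fin n)) : ℝ :=
  bval (g (indicatorVec T))

lemma bval_injective : Function.Injective bval := by
  intro a b
  cases a <;> cases b <;> simp [bval]

lemma flip1_flip1 (x : Fin n → Bool) (i : Fin n) : flip1 (flip1 x i) i = x := by
  simp [flip1]

lemma flip1_indicatorVec {T : Finset (Fin n)} {i : Fin n} (hi : i ∉ T) :
    flip1 (indicatorVec T) i = indicatorVec (insert i T) := by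
  funext k
  by_cases hk : k = i
  · subst hk
    simp [flip1, indicatorVec, hi]
  · simp [flip1, indicatorVec, hk, Function.update_of_ne]

lemma indicatorVec_filter (x : Fin n → Bool) : indicatorVec (univ.filter fun k ↦ x k) = x := by
  funext k
  simp [indicatorVec]

variable {g : (Fin n → Bool) → Bool} {i j : Fin n}

lemma relevant_iff_exists_insert_ne :
    Relevant g i ↔ ∃ T, onSets g (insert i T) ≠ onSets g T := by
  simp only [onSets, bval_injective.ne_iff]
  constructor
  · rintro ⟨x, hx⟩
    wlog hxi : x i = false generalizing x
    · exact this (flip1 x i) (by rwa [flip1_flip1, ne_comm]) (by simpa [flip1] using hxi)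
    refine ⟨univ.filter fun k ↦ x k, ?_⟩
    rwa [← flip1_indicatorVec (by simp [hxi]), indicatorVec_filter]
  · rintro ⟨T, hT⟩
    have hi : i ∉ T := fun hi ↦ hT (by rw [insert_eq_of_mem hi])
    exact ⟨indicatorVec T, by rwa [flip1_indicatorVec hi]⟩

lemma relevant_iff_moebiusSupport_nonempty :
    Relevant g i ↔ (moebiusSupport (onSets g) i).Nonempty := by
  rw [relevant_iff_exists_insert_ne, ← not_iff_not]
  simp only [not_exists, not_not, insert_eq_iff_moebiusTransform_eq_zero,
    not_nonempty_iff_eq_empty, eq_empty_iff_forall_notMem, mem_moebiusSupport, not_and]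

lemma onSets_restrict_false :
    onSets (restrict g {j} fun _ ↦ false) = fun T ↦ onSets g (T.erase j) := by
  funext T
  simp only [onSets, _root_.restrict]
  congr 2
  funext k
  by_cases hk : k = j <;> simp [indicatorVec, hk]

lemma onSets_restrict_true :
    onSets (restrict g {j} fun _ ↦ true) = fun T ↦ onSets g (insert j T) := by
  funext T
  simp only [onSets, _root_.restrict]
  congr 2
  funext k
  by_cases hk : k = j <;> simp [indicatorVec, hk]

end BooleanFunction

section MultilinearPolynomial

variable {n : ℕ}

lemma monOf_apply (S : Finset (Fin n)) (k : Fin n) : monOf S k = if k ∈ S then 1 else 0 := by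
  simp [monOf, Finsupp.finsetSum_apply, Finsupp.single_apply]

lemma monOf_support (S : Finset (Fin n)) : (monOf S).support = S := by
  ext k
  simp [monOf_apply]

lemma monOf_injective : Function.Injective (monOf (n := n)) := fun S T h ↦ by
  rw [← monOf_support S, h, monOf_support]

lemma monOf_support_of_le_one {m : Fin n →₀ ℕ} (h : ∀ k, m k ≤ 1) : monOf m.support = m := by
  ext k
  have := h k
  simp only [monOf_apply, Finsupp.mem_support_iff]
  split_ifs <;> omega

lemma sum_monOf (S : Finset (Fin n)) : ((monOf S).sum fun _ e ↦ e) = #S := by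
  simp [Finsupp.sum, monOf_support, monOf_apply]

lemma prod_bval_indicatorVec_pow_monOf (S T : Finset (Fin n)) :
    ∏ k, bval (indicatorVec T k) ^ monOf S k = if S ⊆ T then 1 else 0 := by
  simp only [monOf_apply, pow_ite, pow_one, pow_zero, prod_ite_mem, univ_inter, indicatorVec, bval,
    decide_eq_true_eq]
  rw [prod_boole]
  rfl

variable {Q : MvPolynomial (Fin n) ℝ} {g : (Fin n → Bool) → Bool}

lemma onSets_eq_zetaTransform (hQ : Represents Q g) :
    onSets g = zetaTransform fun S ↦ coeff (monOf S) Q := by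
  funext T
  have hsupp : Q.support ⊆ univ.image monOf := fun m hm ↦
    mem_image.2 ⟨m.support, mem_univ _, monOf_support_of_le_one (hQ.1 m hm)⟩
  rw [onSets, ← hQ.2, eval_eq', sum_subset hsupp fun m _ hm ↦ by rw [notMem_support_iff.1 hm,
    zero_mul], sum_image monOf_injective.injOn, zetaTransform]
  simp only [prod_bval_indicatorVec_pow_monOf, mul_ite, mul_one, mul_zero]
  rw [← sum_filter]
  congr 1
  ext S
  simp

lemma coeff_monOf_eq_moebiusTransform (hQ : Represents Q g) (S : Finset (Fin n)) :
    coeff (monOf S) Q = moebiusTransform (onSets g) S := by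
  rw [onSets_eq_zetaTransform hQ, moebiusTransform_zetaTransform]

lemma degI_eq_degreeAt (hQ : Represents Q g) (i : Fin n) : degI Q i = degreeAt (onSets g) i := by
  have hsupp : Q.support.filter (fun m ↦ m i ≠ 0) = (moebiusSupport (onSets g) i).image monOf := by
    ext m
    simp only [mem_filter, mem_support_iff, mem_image, mem_moebiusSupport,
      ← coeff_monOf_eq_moebiusTransform hQ]
    constructor
    · rintro ⟨hm, hmi⟩
      have hm' := monOf_support_of_le_one (hQ.1 m (mem_support_iff.2 hm))
      exact ⟨m.support, ⟨Finsupp.mem_support_iff.2 hmi, by rwa [hm']⟩, hm'⟩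
    · rintro ⟨S, ⟨hiS, hS⟩, rfl⟩
      exact ⟨hS, by simp [monOf_apply, hiS]⟩
  rw [degI, hsupp, sup_image]
  exact sup_congr rfl fun S _ ↦ sum_monOf S

end MultilinearPolynomial

/-- if `i ≠ j` and `i` is relevant for `f`, then
`2^{-deg_i(f)} ≤ 2^{-deg_i(f_0)-1} + 2^{-deg_i(f_1)-1}`, where `f_0`, `f_1` are the
restrictions setting `x_j = 0, 1`, and `2^{-deg_i(g)}` is read as `0` when `i` is
irrelevant for `g`. -/
theorem stmt_3 {n : ℕ} (f : (Fin n → Bool) → Bool) (P : MvPolynomial (Fin n) ℝ)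
    (hP : Represents P f) (i j : Fin n) (hij : i ≠ j)
    (f0 f1 : (Fin n → Bool) → Bool)
    (hf0 : f0 = restrict f {j} (fun _ => false))
    (hf1 : f1 = restrict f {j} (fun _ => true))
    (Q0 Q1 : MvPolynomial (Fin n) ℝ)
    (hQ0 : Represents Q0 f0) (hQ1 : Represents Q1 f1)
    (hi : Relevant f i) :
    ((2:ℝ) ^ degI P i)⁻¹ ≤
      (if Relevant f0 i then ((2:ℝ) ^ degI Q0 i)⁻¹ else 0) / 2 +
      (if Relevant f1 i then ((2:ℝ) ^ degI Q1 i)⁻¹ else 0) / 2 := by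
  rw [degI_eq_degreeAt hP, degI_eq_degreeAt hQ0, degI_eq_degreeAt hQ1]
  simp only [relevant_iff_moebiusSupport_nonempty] at hi ⊢
  subst hf0 hf1
  rw [onSets_restrict_false, onSets_restrict_true]
  exact inv_two_pow_degreeAt_le hij hi
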